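/- Let X be an n×d real matrix of full column rank, y ∈ ℝⁿ, λ > 0, θ* the least-squares solution and θ_RR(λ) the ridge regression solution. Then ‖Xθ_RR(λ) − y‖₂ ≤ ‖Xθ* − y‖₂ + (λ/(σ_min(X)² + λ)) · ‖Xθ*‖₂. -/

import Mathlib

/-!
Both estimators satisfy normal equations, `XᵀX θ* = Xᵀy` and `(XᵀX + λ) θ_RR = Xᵀy`, so the
difference `e = θ* - θ_RR` solves `(XᵀX + λ) e = λ θ*`. In an orthonormal eigenbasis of `XᵀX`,
with eigenvalues `μᵢ ≥ σ_min²`, this reads `eᵢ = λ / (μᵢ + λ) · θ*ᵢ`, hence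
`‖X e‖² = ∑ μᵢ eᵢ² ≤ (λ / (σ_min² + λ))² ∑ μᵢ θ*ᵢ² = (λ / (σ_min² + λ))² ‖X θ*‖²`.
The triangle inequality for `X θ_RR - y = (X θ* - y) - X e` finishes.
-/

open Matrix Real Finset

/-- Euclidean (ℓ₂) norm of a finite-dimensional real vector. -/
noncomputable def euclNorm {ι : Type*} [Fintype ι] (v : ι → ℝ) : ℝ :=
  Real.sqrt (∑ i, v i ^ 2)

/-- Singular values of a real matrix: square roots of the eigenvalues of `Xᵀ X`. -/
noncomputable def singVals {n d : ℕ} (X : Matrix (Fin n) (Fin d) ℝ) : Fin d → ℝ :=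
  fun i => Real.sqrt ((show (Xᵀ * X).IsHermitian by
    simpa only [Matrix.conjTranspose_eq_transpose_of_trivial] using
      Matrix.isHermitian_conjTranspose_mul_self X).eigenvalues i)

/-- Smallest singular value. -/
noncomputable def sigMin {n d : ℕ} [NeZero d] (X : Matrix (Fin n) (Fin d) ℝ) : ℝ :=
  Finset.univ.inf' Finset.univ_nonempty (singVals X)

/-- Least squares solution `θ* = (XᵀX)⁻¹ Xᵀ y`. -/
noncomputable def lsSol {n d : ℕ} (X : Matrix (Fin n) (Fin d) ℝ) (y : Fin n → ℝ) :
    Fin d → ℝ :=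
  ((Xᵀ * X)⁻¹ * Xᵀ).mulVec y

/-- Ridge regression solution `θ_RR(λ) = (XᵀX + λI)⁻¹ Xᵀ y`. -/
noncomputable def rrSol {n d : ℕ} (X : Matrix (Fin n) (Fin d) ℝ) (y : Fin n → ℝ)
    (lam : ℝ) : Fin d → ℝ :=
  ((Xᵀ * X + lam • (1 : Matrix (Fin d) (Fin d) ℝ))⁻¹ * Xᵀ).mulVec y

lemma euclNorm_eq_norm_toLp {ι : Type*} [Fintype ι] (v : ι → ℝ) :
    euclNorm v = ‖WithLp.toLp 2 v‖ := by
  simp only [euclNorm, EuclideanSpace.norm_eq, Real.norm_eq_abs, sq_abs]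

lemma euclNorm_sub_le {ι : Type*} [Fintype ι] (v w : ι → ℝ) :
    euclNorm (v - w) ≤ euclNorm v + euclNorm w := by
  simpa only [euclNorm_eq_norm_toLp, WithLp.toLp_sub] using norm_sub_le _ _

lemma euclNorm_nonneg {ι : Type*} [Fintype ι] (v : ι → ℝ) : 0 ≤ euclNorm v :=
  Real.sqrt_nonneg _

lemma euclNorm_mulVec_sq {m ι : Type*} [Fintype m] [Fintype ι] (X : Matrix m ι ℝ)
    (u : ι → ℝ) : euclNorm (X *ᵥ u) ^ 2 = u ⬝ᵥ (Xᵀ * X) *ᵥ u := by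
  rw [euclNorm, Real.sq_sqrt (by positivity), ← mulVec_mulVec, dotProduct_mulVec,
    vecMul_transpose]
  simp only [dotProduct, sq]

lemma mul_sq_le_of_add_mul_eq {μ s lam a b : ℝ} (hs : 0 ≤ s) (hsμ : s ≤ μ) (hlam : 0 < lam)
    (h : (μ + lam) * a = lam * b) : μ * a ^ 2 ≤ (lam / (s + lam)) ^ 2 * (μ * b ^ 2) := by
  have hμ : 0 ≤ μ := hs.trans hsμ
  rw [div_pow, div_mul_eq_mul_div, le_div_iff₀ (by positivity)]
  calc μ * a ^ 2 * (s + lam) ^ 2 ≤ μ * a ^ 2 * (μ + lam) ^ 2 := by gcongr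
    _ = lam ^ 2 * (μ * b ^ 2) := by linear_combination μ * ((μ + lam) * a + lam * b) * h

namespace Matrix.IsHermitian

variable {ι : Type*} [Fintype ι] [DecidableEq ι] {A : Matrix ι ι ℝ} (hA : A.IsHermitian)

noncomputable def eigenCoord : (ι → ℝ) →ₗ[ℝ] ι → ℝ :=
  (star (hA.eigenvectorUnitary : Matrix ι ι ℝ)).mulVecLin

lemma eigenCoord_mulVec (v : ι → ℝ) :
    hA.eigenCoord (A *ᵥ v) = hA.eigenvalues * hA.eigenCoord v := by
  set U : Matrix ι ι ℝ := ↑hA.eigenvectorUnitary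
  have hdiag : star U * A * U = diagonal hA.eigenvalues := by
    simpa [Unitary.conjStarAlgAut_star_apply] using hA.conjStarAlgAut_star_eigenvectorUnitary
  have hcomm : star U * A = diagonal hA.eigenvalues * star U := by
    rw [← hdiag, Matrix.mul_assoc _ U, mem_unitaryGroup_iff.mp hA.eigenvectorUnitary.2,
      Matrix.mul_one]
  ext i
  rw [eigenCoord, mulVecLin_apply, mulVecLin_apply, mulVec_mulVec, hcomm, ← mulVec_mulVec,
    mulVec_diagonal, Pi.mul_apply]

lemma dotProduct_mulVec_eq_sum_eigenCoord (v : ι → ℝ) :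
    v ⬝ᵥ A *ᵥ v = ∑ i, hA.eigenvalues i * hA.eigenCoord v i ^ 2 := by
  set U : Matrix ι ι ℝ := ↑hA.eigenvectorUnitary
  have hv : v = U *ᵥ hA.eigenCoord v := by
    rw [eigenCoord, mulVecLin_apply, mulVec_mulVec,
      mem_unitaryGroup_iff.mp hA.eigenvectorUnitary.2, one_mulVec]
  calc v ⬝ᵥ A *ᵥ v = hA.eigenCoord v ⬝ᵥ hA.eigenCoord (A *ᵥ v) := by
        nth_rewrite 1 [hv]
        rw [dotProduct_comm, dotProduct_mulVec, ← mulVec_transpose, dotProduct_comm]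
        simp only [eigenCoord, mulVecLin_apply]
        rfl -- over `ℝ`, `star U` is `Uᵀ` by definition
    _ = ∑ i, hA.eigenvalues i * hA.eigenCoord v i ^ 2 := by
        rw [eigenCoord_mulVec]
        exact Finset.sum_congr rfl fun i _ => by simp only [Pi.mul_apply]; ring

lemma dotProduct_mulVec_le_of_add_smul_one_mulVec_eq {s lam : ℝ} (hs : 0 ≤ s)
    (hsA : ∀ i, s ≤ hA.eigenvalues i) (hlam : 0 < lam) {u w : ι → ℝ}
    (h : (A + lam • 1) *ᵥ u = lam • w) :
    u ⬝ᵥ A *ᵥ u ≤ (lam / (s + lam)) ^ 2 * (w ⬝ᵥ A *ᵥ w) := by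
  have hcoord : ∀ i, (hA.eigenvalues i + lam) * hA.eigenCoord u i = lam * hA.eigenCoord w i := by
    intro i
    have := congrFun (congrArg hA.eigenCoord h) i
    simpa only [add_mulVec, smul_mulVec, one_mulVec, map_add, map_smul, eigenCoord_mulVec,
      Pi.add_apply, Pi.mul_apply, Pi.smul_apply, smul_eq_mul, add_mul] using this
  rw [hA.dotProduct_mulVec_eq_sum_eigenCoord, hA.dotProduct_mulVec_eq_sum_eigenCoord,
    Finset.mul_sum]
  exact Finset.sum_le_sum fun i _ => mul_sq_le_of_add_mul_eq hs (hsA i) hlam (hcoord i)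

end Matrix.IsHermitian

namespace Matrix

lemma mulVec_injective_of_rank_eq_card {m n K : Type*} [Field K] [Fintype n]
    {X : Matrix m n K} (h : X.rank = Fintype.card n) : Function.Injective X.mulVec :=
  mulVec_injective_iff.mpr <| linearIndependent_iff_card_eq_finrank_span.mpr <| by
    rw [Set.finrank, ← rank_eq_finrank_span_cols, h]

lemma posDef_transpose_mul_self_of_rank_eq_card {m n : Type*} [Fintype m] [Fintype n]
    {X : Matrix m n ℝ} (h : X.rank = Fintype.card n) : (Xᵀ * X).PosDef := by
  simpa only [conjTranspose_eq_transpose_of_trivial] using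
    PosDef.conjTranspose_mul_self X (mulVec_injective_of_rank_eq_card h)

lemma mulVec_inv_mul_mulVec {m n K : Type*} [Fintype m] [Fintype n] [DecidableEq n] [CommRing K]
    {A : Matrix n n K} (hA : IsUnit A) (B : Matrix n m K) (y : m → K) :
    A *ᵥ ((A⁻¹ * B) *ᵥ y) = B *ᵥ y := by
  rw [mulVec_mulVec, mul_nonsing_inv_cancel_left _ _ ((isUnit_iff_isUnit_det A).mp hA)]

end Matrix

section Regression

variable {n d : ℕ} {X : Matrix (Fin n) (Fin d) ℝ}

lemma ridge_mulVec_lsSol_sub_rrSol (hX : (Xᵀ * X).PosDef) (y : Fin n → ℝ) {lam : ℝ}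
    (hlam : 0 ≤ lam) :
    (Xᵀ * X + lam • 1) *ᵥ (lsSol X y - rrSol X y lam) = lam • lsSol X y := by
  have hridge : (Xᵀ * X + lam • 1).PosDef := hX.add_posSemidef (PosSemidef.one.smul hlam)
  rw [mulVec_sub, rrSol, mulVec_inv_mul_mulVec hridge.isUnit, add_mulVec, lsSol,
    mulVec_inv_mul_mulVec hX.isUnit, ← lsSol, smul_mulVec, one_mulVec, add_sub_cancel_left]

lemma sigMin_nonneg [NeZero d] (X : Matrix (Fin n) (Fin d) ℝ) : 0 ≤ sigMin X :=
  Finset.le_inf' _ _ fun _ _ => Real.sqrt_nonneg _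

lemma sq_sigMin_le_eigenvalues [NeZero d] (hX : (Xᵀ * X).IsHermitian) (i : Fin d) :
    sigMin X ^ 2 ≤ hX.eigenvalues i := by
  have hPSD : (Xᵀ * X).PosSemidef := by
    simpa only [conjTranspose_eq_transpose_of_trivial] using posSemidef_conjTranspose_mul_self X
  exact (Real.le_sqrt (sigMin_nonneg X) (hPSD.eigenvalues_nonneg i)).mp <|
    Finset.inf'_le _ (Finset.mem_univ i)

end Regression

theorem stmt_1 {n d : ℕ} [NeZero d] (X : Matrix (Fin n) (Fin d) ℝ)
    (hrank : X.rank = d) (y : Fin n → ℝ) (lam : ℝ) (hlam : 0 < lam) :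
    euclNorm (X.mulVec (rrSol X y lam) - y) ≤
      euclNorm (X.mulVec (lsSol X y) - y) +
        (lam / ((sigMin X) ^ 2 + lam)) * euclNorm (X.mulVec (lsSol X y)) := by
  have hX : (Xᵀ * X).PosDef :=
    posDef_transpose_mul_self_of_rank_eq_card (by rw [hrank, Fintype.card_fin])
  set θ := lsSol X y
  set k := lam / (sigMin X ^ 2 + lam)
  have hshrink : euclNorm (X *ᵥ (θ - rrSol X y lam)) ≤ k * euclNorm (X *ᵥ θ) := by
    have hquad := hX.isHermitian.dotProduct_mulVec_le_of_add_smul_one_mulVec_eq (sq_nonneg _)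
      (sq_sigMin_le_eigenvalues _) hlam (ridge_mulVec_lsSol_sub_rrSol hX y hlam.le)
    rw [← euclNorm_mulVec_sq, ← euclNorm_mulVec_sq, ← mul_pow] at hquad
    exact le_of_pow_le_pow_left₀ two_ne_zero
      (mul_nonneg (by positivity) (euclNorm_nonneg _)) hquad
  calc euclNorm (X *ᵥ rrSol X y lam - y)
      = euclNorm ((X *ᵥ θ - y) - X *ᵥ (θ - rrSol X y lam)) := by
        rw [mulVec_sub, sub_sub_sub_cancel_left]
    _ ≤ euclNorm (X *ᵥ θ - y) + euclNorm (X *ᵥ (θ - rrSol X y lam)) := euclNorm_sub_le _ _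
    _ ≤ euclNorm (X *ᵥ θ - y) + k * euclNorm (X *ᵥ θ) := by gcongr
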